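/- arXiv:1811.00775 — 5 statements merged into one kernel-verified Lean document; each statement's English description precedes it below -/
import Mathlib

section
/- Let φ : ℕ × ℕ → ℕ and for each positive integer k define φ_k : ℕ × ℕ → ℕ by φ_k(n,m) = ∑_{(q,l) ∈ S_k(n,m)} gcd(q,k)·φ(q,l), where S_k(n,m) = {(q,l) ∈ ℕ₊ × ℕ : n = lcm(q,k)/k and m = (lcm(q,k)/q)·l + (lcm(q,k)/k)·(k-1)}. Then for all positive integers q and l with d = gcd(q,l), we have q·φ(q,l) = ∑_{c ∣ d} μ(c)·φ_{q/c}(1, (q+l)/c − 1), where μ is the Möbius function. -/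
open Finset

/-- Characterization of the members of the filtered set in the special case
`n = 1`, `k = q0 * d0`, `m = q0*d0 + l0*d0 - 1` with `q0, l0` coprime. -/
lemma stmt_2_mem (q0 l0 d0 a b : ℕ) (hq0 : 0 < q0) (hd0 : 0 < d0)
    (hcop : Nat.Coprime q0 l0) (ha1 : 1 ≤ a)
    (hcond1 : 1 = Nat.lcm a (q0 * d0) / (q0 * d0))
    (hcond2 : q0 * d0 + l0 * d0 - 1 = (Nat.lcm a (q0 * d0) / a) * b +
      (Nat.lcm a (q0 * d0) / (q0 * d0)) * (q0 * d0 - 1)) :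
    ∃ v, v ∣ d0 ∧ a = q0 * v ∧ b = l0 * v := by
  set k := q0 * d0 with hk
  have hkpos : 0 < k := Nat.mul_pos hq0 hd0
  have hklcm : k ∣ Nat.lcm a k := Nat.dvd_lcm_right a k
  have hlcm : Nat.lcm a k = k := by
    obtain ⟨t, ht⟩ := hklcm
    have h1 : (1 : ℕ) = t := by
      rw [ht, Nat.mul_div_cancel_left _ hkpos] at hcond1; exact hcond1
    rw [ht, ← h1, mul_one]
  have hak' : a ∣ k := hlcm ▸ Nat.dvd_lcm_left a k
  rw [hlcm, Nat.div_self hkpos] at hcond2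
  have hgb : (k / a) * b = l0 * d0 := by omega
  have hga : (k / a) * a = k := Nat.div_mul_cancel hak'
  have hgpos : 0 < k / a := by
    rcases Nat.eq_zero_or_pos (k / a) with h | h
    · rw [h, zero_mul] at hga; omega
    · exact h
  have hgk : (k / a) ∣ k := ⟨a, hga.symm⟩
  have hgl : (k / a) ∣ l0 * d0 := ⟨b, hgb.symm⟩
  have hgd0 : (k / a) ∣ d0 := by
    have := Nat.dvd_gcd hgk hgl
    rwa [hk, Nat.gcd_mul_right, hcop.gcd_eq_one, one_mul] at this
  obtain ⟨w, hw⟩ := hgd0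
  have hwdvd : w ∣ d0 := ⟨k / a, by rw [hw, mul_comm]⟩
  have haw : a = q0 * w := by
    have h1 : (k / a) * (q0 * w) = q0 * ((k / a) * w) := by ring
    have h : (k / a) * a = (k / a) * (q0 * w) := by
      rw [h1, ← hw, ← hk, hga]
    exact Nat.eq_of_mul_eq_mul_left hgpos h
  have hbw : b = l0 * w := by
    have h1 : (k / a) * (l0 * w) = l0 * ((k / a) * w) := by ring
    have h : (k / a) * b = (k / a) * (l0 * w) := by
      rw [h1, ← hw, hgb]
    exact Nat.eq_of_mul_eq_mul_left hgpos h
  exact ⟨w, hwdvd, haw, hbw⟩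

lemma stmt_2_key (φ : ℕ × ℕ → ℕ) (q0 l0 d0 : ℕ) (hq0 : 0 < q0) (hl0 : 0 < l0)
    (hd0 : 0 < d0) (hcop : Nat.Coprime q0 l0) :
    ∑ p ∈ (Finset.Icc 1 (1 * (q0 * d0)) ×ˢ Finset.Icc 0 (q0 * d0 + l0 * d0 - 1)).filter
        (fun p => 1 = Nat.lcm p.1 (q0 * d0) / (q0 * d0) ∧
          q0 * d0 + l0 * d0 - 1 = (Nat.lcm p.1 (q0 * d0) / p.1) * p.2 +
            (Nat.lcm p.1 (q0 * d0) / (q0 * d0)) * (q0 * d0 - 1)),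
        Nat.gcd p.1 (q0 * d0) * φ p
      = ∑ v ∈ d0.divisors, (q0 * v) * φ (q0 * v, l0 * v) := by
  set k := q0 * d0 with hk
  have hkpos : 0 < k := Nat.mul_pos hq0 hd0
  refine Finset.sum_nbij' (fun p => p.1 / q0) (fun v => (q0 * v, l0 * v)) ?_ ?_ ?_ ?_ ?_
  · -- forward membership: p in filter → p.1/q0 ∈ d0.divisors
    rintro ⟨a, b⟩ hp
    simp only [Finset.mem_filter, Finset.mem_product, Finset.mem_Icc] at hp
    obtain ⟨⟨⟨ha1, hak⟩, -, hbm⟩, hcond1, hcond2⟩ := hp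
    obtain ⟨v, hvd, hav, hbv⟩ := stmt_2_mem q0 l0 d0 a b hq0 hd0 hcop ha1 hcond1 hcond2
    subst hav; subst hbv
    simp only [Nat.mul_div_cancel_left _ hq0]
    exact Nat.mem_divisors.mpr ⟨hvd, by omega⟩
  · -- backward membership
    rintro v hv
    simp only [Nat.mem_divisors] at hv
    obtain ⟨hvd, -⟩ := hv
    have hvpos : 0 < v := Nat.pos_of_dvd_of_pos hvd hd0
    have hdvd : q0 * v ∣ k := mul_dvd_mul_left q0 hvd
    have hlcm : Nat.lcm (q0 * v) k = k :=
      Nat.dvd_antisymm (Nat.lcm_dvd hdvd dvd_rfl) (Nat.dvd_lcm_right _ _)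
    have hvle : v ≤ d0 := Nat.le_of_dvd hd0 hvd
    have hka : k / (q0 * v) = d0 / v := Nat.mul_div_mul_left d0 v hq0
    have hdv : v * (d0 / v) = d0 := Nat.mul_div_cancel' hvd
    simp only [Finset.mem_filter, Finset.mem_product, Finset.mem_Icc, hlcm, hka]
    have h1 : (d0 / v) * (l0 * v) = l0 * d0 := by
      rw [mul_comm l0 v, ← mul_assoc, mul_comm (d0 / v) v, hdv, mul_comm]
    have h2 : l0 * v ≤ l0 * d0 := Nat.mul_le_mul_left l0 hvle
    have h3 : q0 * v ≤ q0 * d0 := Nat.mul_le_mul_left q0 hvle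
    have h4 : 1 ≤ q0 * v := Nat.one_le_iff_ne_zero.mpr (by positivity)
    have h5 : 1 ≤ q0 * d0 := hkpos
    refine ⟨⟨⟨h4, by omega⟩, by omega, by omega⟩, (Nat.div_self hkpos).symm, ?_⟩
    rw [Nat.div_self hkpos, h1]
    omega
  · -- left inverse on filter set
    rintro ⟨a, b⟩ hp
    simp only [Finset.mem_filter, Finset.mem_product, Finset.mem_Icc] at hp
    obtain ⟨⟨⟨ha1, hak⟩, -, hbm⟩, hcond1, hcond2⟩ := hp
    obtain ⟨v, hvd, hav, hbv⟩ := stmt_2_mem q0 l0 d0 a b hq0 hd0 hcop ha1 hcond1 hcond2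
    subst hav; subst hbv
    simp only [Nat.mul_div_cancel_left _ hq0]
  · -- right inverse on divisors
    intro v hv
    simp [Nat.mul_div_cancel_left _ hq0]
  · -- values agree
    rintro ⟨a, b⟩ hp
    simp only [Finset.mem_filter, Finset.mem_product, Finset.mem_Icc] at hp
    obtain ⟨⟨⟨ha1, hak⟩, -, hbm⟩, hcond1, hcond2⟩ := hp
    obtain ⟨v, hvd, hav, hbv⟩ := stmt_2_mem q0 l0 d0 a b hq0 hd0 hcop ha1 hcond1 hcond2
    subst hav; subst hbv
    simp only [Nat.mul_div_cancel_left _ hq0]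
    rw [hk, Nat.gcd_mul_left, Nat.gcd_eq_left hvd]

/-- Abstract combinatorial content of Proposition 4.3: Möbius inversion recovering
φ(q,l) from the values φ_k(1,·), where
φ_k(n,m) = ∑_{(q,l) ∈ S_k(n,m)} gcd(q,k)·φ(q,l) and
S_k(n,m) = {(q,l) ∈ ℕ₊ × ℕ : n = lcm(q,k)/k and m = (lcm(q,k)/q)·l + (lcm(q,k)/k)·(k-1)}. -/
theorem stmt_2 (φ : ℕ × ℕ → ℕ) (φk : ℕ → ℕ × ℕ → ℕ)
    (hφk : ∀ k n m : ℕ, 0 < k → φk k (n, m) =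
      ∑ p ∈ (Finset.Icc 1 (n * k) ×ˢ Finset.Icc 0 m).filter
        (fun p => n = Nat.lcm p.1 k / k ∧
          m = (Nat.lcm p.1 k / p.1) * p.2 + (Nat.lcm p.1 k / k) * (k - 1)),
        Nat.gcd p.1 k * φ p) :
    ∀ q l : ℕ, 0 < q → 0 < l →
      (q : ℤ) * (φ (q, l) : ℤ) =
        ∑ c ∈ (Nat.gcd q l).divisors,
          (ArithmeticFunction.moebius c) * (φk (q / c) (1, (q + l) / c - 1) : ℤ) := by
  intro q l hq hl
  set d := Nat.gcd q l with hd
  have hdpos : 0 < d := Nat.gcd_pos_of_pos_left l hq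
  obtain ⟨q0, hq0eq⟩ : d ∣ q := Nat.gcd_dvd_left q l
  obtain ⟨l0, hl0eq⟩ : d ∣ l := Nat.gcd_dvd_right q l
  have hq0 : 0 < q0 := by
    rcases Nat.eq_zero_or_pos q0 with h | h
    · rw [h, mul_zero] at hq0eq; omega
    · exact h
  have hl0 : 0 < l0 := by
    rcases Nat.eq_zero_or_pos l0 with h | h
    · rw [h, mul_zero] at hl0eq; omega
    · exact h
  have hcop : Nat.Coprime q0 l0 := by
    have := Nat.coprime_div_gcd_div_gcd (m := q) (n := l) hdpos
    rwa [← hd, hq0eq, hl0eq, Nat.mul_div_cancel_left _ hdpos,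
      Nat.mul_div_cancel_left _ hdpos] at this
  -- the divisor-sum function and its Möbius inversion
  set F : ℕ → ℤ := fun v => ((q0 * v : ℕ) : ℤ) * (φ (q0 * v, l0 * v) : ℤ) with hF
  set G : ℕ → ℤ := fun n => ∑ v ∈ n.divisors, F v with hG
  have hGdef : ∀ n > 0, ∑ v ∈ n.divisors, F v = G n := fun n _ => rfl
  have hmob := (ArithmeticFunction.sum_eq_iff_sum_smul_moebius_eq
    (f := F) (g := G)).mp hGdef d hdpos
  have hanti : ∑ x ∈ d.divisorsAntidiagonal,
      (ArithmeticFunction.moebius x.1 : ℤ) • G x.2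
      = ∑ c ∈ d.divisors, (ArithmeticFunction.moebius c : ℤ) • G (d / c) :=
    Nat.sum_divisorsAntidiagonal (fun c m => (ArithmeticFunction.moebius c : ℤ) • G m)
  -- identify each φk value with G (d / c)
  have hterm : ∀ c ∈ d.divisors,
      (ArithmeticFunction.moebius c : ℤ) * (φk (q / c) (1, (q + l) / c - 1) : ℤ)
      = (ArithmeticFunction.moebius c : ℤ) • G (d / c) := by
    intro c hc
    rw [Nat.mem_divisors] at hc
    obtain ⟨⟨d0, hd0eq⟩, -⟩ := hc
    have hcpos : 0 < c := by
      rcases Nat.eq_zero_or_pos c with h | h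
      · rw [h, zero_mul] at hd0eq; omega
      · exact h
    have hd0 : 0 < d0 := by
      rcases Nat.eq_zero_or_pos d0 with h | h
      · rw [h, mul_zero] at hd0eq; omega
      · exact h
    have hqc : q / c = q0 * d0 := by
      rw [hq0eq, hd0eq]
      rw [show c * d0 * q0 = c * (q0 * d0) by ring, Nat.mul_div_cancel_left _ hcpos]
    have hqlc : (q + l) / c = q0 * d0 + l0 * d0 := by
      rw [hq0eq, hl0eq, hd0eq]
      rw [show c * d0 * q0 + c * d0 * l0 = c * (q0 * d0 + l0 * d0) by ring,
        Nat.mul_div_cancel_left _ hcpos]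
    have hdc : d / c = d0 := by rw [hd0eq, Nat.mul_div_cancel_left _ hcpos]
    have hkpos : 0 < q0 * d0 := Nat.mul_pos hq0 hd0
    rw [hqc, hqlc, hφk (q0 * d0) 1 (q0 * d0 + l0 * d0 - 1) hkpos,
      stmt_2_key φ q0 l0 d0 hq0 hl0 hd0 hcop, hdc]
    rw [smul_eq_mul, hG]
    push_cast
    rfl
  rw [Finset.sum_congr rfl hterm, ← hanti, hmob]
  have hqd : q0 * d = q := by rw [hq0eq, mul_comm]
  have hld : l0 * d = l := by rw [hl0eq, mul_comm]
  simp only [hF]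
  rw [hqd, hld]
end

section
/- Let q₀, l₀ be coprime positive integers and let k, n be positive integers. Then the set S_{(n q₀)}(1, n(q₀+l₀) − 1) := {(q',l') ∈ ℕ₊ × ℕ : lcm(q', n q₀) = n q₀ and n(q₀+l₀) − 1 = n q₀ · (l'/q' + (n q₀ − 1)/(n q₀))} equals {((n/u)·q₀, (n/u)·l₀) : u a positive divisor of n}. -/
/-- The set S_{(n q₀)}(1, n(q₀+l₀)−1) equals {((n/u)·q₀, (n/u)·l₀) : u a positive divisor of n},
for coprime positive integers q₀, l₀ and positive integers k, n. -/
theorem stmt_3 (q₀ l₀ k n : ℕ) (hq : 0 < q₀) (hl : 0 < l₀) (hk : 0 < k)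
    (hcop : Nat.Coprime q₀ l₀) (hn : 0 < n) :
    {p : ℕ × ℕ | 0 < p.1 ∧ Nat.lcm p.1 (n * q₀) = n * q₀ ∧
        ((n : ℚ) * (q₀ + l₀) - 1 =
          (n : ℚ) * q₀ * ((p.2 : ℚ) / (p.1 : ℚ) +
            ((n : ℚ) * q₀ - 1) / ((n : ℚ) * q₀)))} =
      {p : ℕ × ℕ | ∃ u : ℕ, 0 < u ∧ u ∣ n ∧ p = ((n / u) * q₀, (n / u) * l₀)} := by
  ext ⟨q', l'⟩
  simp only [Set.mem_setOf_eq]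
  have hnQ : (n : ℚ) ≠ 0 := by exact_mod_cast hn.ne'
  have hqQ : (q₀ : ℚ) ≠ 0 := by exact_mod_cast hq.ne'
  constructor
  · rintro ⟨hq', hlcm, heq⟩
    have hq'Q : (q' : ℚ) ≠ 0 := by exact_mod_cast hq'.ne'
    have key : l₀ * q' = q₀ * l' := by
      have h2 : (l₀ : ℚ) * q' * (n ^ 2 * q₀) = q₀ * l' * (n ^ 2 * q₀) := by
        field_simp at heq
        linear_combination ((n : ℚ) * q₀) * heq
      have : (l₀ : ℚ) * q' = q₀ * l' :=
        mul_right_cancel₀ (by positivity) h2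
      exact_mod_cast this
    have hdvd : q' ∣ n * q₀ := hlcm ▸ Nat.dvd_lcm_left q' (n * q₀)
    have hq₀dvd : q₀ ∣ q' := hcop.dvd_of_dvd_mul_left ⟨l', key⟩
    obtain ⟨d, hd⟩ := hq₀dvd
    have hdpos : 0 < d := by
      rcases Nat.eq_zero_or_pos d with h | h
      · simp [hd, h] at hq'
      · exact h
    have hl' : l' = d * l₀ := by
      have : q₀ * l' = q₀ * (d * l₀) := by rw [← key, hd]; ring
      exact Nat.eq_of_mul_eq_mul_left hq this
    have hdn : d ∣ n := by
      have h := hdvd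
      rw [hd, mul_comm n q₀] at h
      exact (mul_dvd_mul_iff_left hq.ne').mp h
    refine ⟨n / d, Nat.div_pos (Nat.le_of_dvd hn hdn) hdpos, Nat.div_dvd_of_dvd hdn, ?_⟩
    rw [Nat.div_div_self hdn hn.ne']
    simp [hd, hl', mul_comm]
  · rintro ⟨u, hu, hun, hp⟩
    have h1 : q' = (n / u) * q₀ := congrArg Prod.fst hp
    have h2 : l' = (n / u) * l₀ := congrArg Prod.snd hp
    have hdn : n / u ∣ n := Nat.div_dvd_of_dvd hun
    have hdpos : 0 < n / u := Nat.div_pos (Nat.le_of_dvd hn hun) hu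
    have hdQ : ((n / u : ℕ) : ℚ) ≠ 0 := by exact_mod_cast hdpos.ne'
    subst h1 h2
    refine ⟨Nat.mul_pos hdpos hq, ?_, ?_⟩
    · exact Nat.dvd_antisymm (Nat.lcm_dvd (mul_dvd_mul_right hdn q₀) dvd_rfl) (Nat.dvd_lcm_right _ _)
    · push_cast
      field_simp
      ring
end

section
/- Let V be a K-algebra, ρ ∈ V a nonzero element, and ρ★ ∈ V satisfying (q1) ρ·ρ★·ρ = ρ, (q3) ρ★·ρ·ρ★ = ρ★, and suppose ρ² = 0, (q4') ρ★·ρ★ = 0 and e = ρ·ρ★ + ρ★·ρ where e is an idempotent acting as identity on ρ and ρ★ (e·ρ = ρ·e = ρ, e·ρ★ = ρ★·e = ρ★). If char K ≠ 2 and ρ' ∈ V also satisfies these conditions with ρ' − ρ★ = m·ρ + n·e for some m, n ∈ K, then ρ' = ρ★. -/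
/-- Uniqueness of the quasi-inverse ρ★ of a maximal path ρ with s(ρ)=t(ρ)
(Case 2 of Proposition 7.9), in characteristic ≠ 2. -/
theorem stmt_6 {K V : Type*} [Field K] [Ring V] [Algebra K V]
    (hchar : (2 : K) ≠ 0) (ρ ρs e ρ' : V) (m n : K)
    (hρ : ρ ≠ 0)
    (hq1 : ρ * ρs * ρ = ρ) (hq3 : ρs * ρ * ρs = ρs)
    (hsq : ρ * ρ = 0) (hq4 : ρs * ρs = 0) (he : e = ρ * ρs + ρs * ρ)
    (heρ : e * ρ = ρ) (hρe : ρ * e = ρ) (heρs : e * ρs = ρs) (hρse : ρs * e = ρs)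
    (hq1' : ρ * ρ' * ρ = ρ) (hq3' : ρ' * ρ * ρ' = ρ')
    (hq4' : ρ' * ρ' = 0) (he' : e = ρ * ρ' + ρ' * ρ)
    (heρ' : e * ρ' = ρ') (hρ'e : ρ' * e = ρ')
    (hdiff : ρ' - ρs = m • ρ + n • e) :
    ρ' = ρs := by
  -- auxiliary: if c • v = 0 and v ≠ 0 then c = 0
  have key : ∀ (c : K) (v : V), c • v = 0 → v ≠ 0 → c = 0 := by
    intro c v hcv hv
    by_contra hc
    apply hv
    calc v = (c⁻¹ * c) • v := by rw [inv_mul_cancel₀ hc, one_smul]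
    _ = c⁻¹ • (c • v) := by rw [mul_smul]
    _ = 0 := by rw [hcv, smul_zero]
  have hρ'eq : ρ' = ρs + m • ρ + n • e := by
    have := hdiff
    linear_combination (norm := module) this
  -- Step 1: n = 0
  have e1 : ρ * ρ' = ρ * ρs + n • ρ := by
    rw [hρ'eq]; simp [mul_add, mul_smul_comm, hsq, hρe]
  have e2 : ρ' * ρ = ρs * ρ + n • ρ := by
    rw [hρ'eq]; simp [add_mul, smul_mul_assoc, hsq, heρ]
  have h2n : (2 * n) • ρ = 0 := by
    have h := he'
    rw [e1, e2, he] at h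
    linear_combination (norm := module) -h
  have hn : n = 0 := by
    have h2n0 : 2 * n = 0 := key _ _ h2n hρ
    rcases mul_eq_zero.mp h2n0 with h | h
    · exact absurd h hchar
    · exact h
  -- Step 2: m = 0
  have hρ'eq2 : ρ' = ρs + m • ρ := by rw [hρ'eq, hn, zero_smul, add_zero]
  have hme : m • e = 0 := by
    have h0 : ρ' * ρ' = m • e := by
      rw [hρ'eq2, he]
      simp only [mul_add, add_mul, mul_smul_comm, smul_mul_assoc, hsq, hq4,
        smul_smul, smul_zero]
      module
    rw [← h0, hq4']
  have hene : e ≠ 0 := by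
    intro h; apply hρ; rw [← heρ, h, zero_mul]
  have hm : m = 0 := key _ _ hme hene
  rw [hρ'eq2, hm, zero_smul, add_zero]
end

section
/- Let V be a K-algebra with char K ≠ 2, e ∈ V an idempotent, and θ, θ★ ∈ eVe with θ² = 0, θ★·θ★·θ = 0, θ·θ★·θ ≠ 0, such that {θ★·θ, θ·θ★, θ, θ★} spans eVe and e·θ = θ·e = θ. If e = x·(θ★θ) + y·(θθ★) + z·θ + w·θ★ for scalars x,y,z,w, then w = 0, z = 0, and moreover x·(θ★θ) + y·(θθ★) idempotent with x² replacing x forces x = y = 1 when θ★θ and θθ★ are nonzero orthogonal idempotents. In particular e = θ★θ + θθ★. -/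
/-- Claim 7.12 / Proposition 7.15(3)(ii): in char K ≠ 2, if
e = x·(θ★θ) + y·(θθ★) + z·θ + w·θ★ where θ★θ and θθ★ are nonzero orthogonal
idempotents, θ² = 0, θ★θ★θ = 0, θθ★θ ≠ 0, and {θ★θ, θθ★, θ, θ★} spans eVe,
then w = 0, z = 0, x = y = 1, and e = θ★θ + θθ★. -/
theorem stmt_7 {K V : Type*} [Field K] [Ring V] [Algebra K V]
    (hchar : (2 : K) ≠ 0)
    (e θ θs : V) (x y z w : K)
    (he : IsIdempotentElem e)
    (heθ : e * θ = θ) (hθe : θ * e = θ) (heθs : e * θs = θs) (hθse : θs * e = θs)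
    (hθ2 : θ * θ = 0) (hss : θs * θs * θ = 0) (hne : θ * θs * θ ≠ 0)
    (hspan : ∀ v : V, e * v * e = v →
      v ∈ Submodule.span K ({θs * θ, θ * θs, θ, θs} : Set V))
    (hε : IsIdempotentElem (θs * θ)) (hε' : IsIdempotentElem (θ * θs))
    (hεne : θs * θ ≠ 0) (hε'ne : θ * θs ≠ 0)
    (horth1 : (θs * θ) * (θ * θs) = 0) (horth2 : (θ * θs) * (θs * θ) = 0)
    (heq : e = x • (θs * θ) + y • (θ * θs) + z • θ + w • θs) :
    w = 0 ∧ z = 0 ∧ x = 1 ∧ y = 1 ∧ e = θs * θ + θ * θs := by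
  have hne' : θ * (θs * θ) ≠ 0 := by rw [← mul_assoc]; exact hne
  -- e * θ = θ expanded
  have h1 : y • (θ * (θs * θ)) + w • (θs * θ) = θ := by
    have h := heθ
    rw [heq] at h
    simp only [add_mul, smul_mul_assoc, mul_assoc, hθ2, mul_zero, smul_zero, zero_add,
      add_zero] at h
    exact h
  -- multiply h1 on the left by θ to get w = 0
  have hw : w = 0 := by
    have h2 : θ * (y • (θ * (θs * θ)) + w • (θs * θ)) = 0 := by rw [h1, hθ2]
    have ha : θ * (θ * (θs * θ)) = 0 := by rw [← mul_assoc, hθ2, zero_mul]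
    rw [mul_add, mul_smul_comm, mul_smul_comm, ha, smul_zero, zero_add] at h2
    rcases smul_eq_zero.mp h2 with h | h
    · exact h
    · exact absurd h hne'
  subst hw
  rw [zero_smul, add_zero] at h1
  -- y = 1
  have hy : y = 1 := by
    have h3 : y • (θ * (θs * θ) * θs) = θ * θs := by rw [← smul_mul_assoc, h1]
    have hassoc : θ * (θs * θ) * θs = (θ * θs) * (θ * θs) := by simp only [mul_assoc]
    rw [hassoc, hε'.eq] at h3
    have h4 : (y - 1) • (θ * θs) = 0 := by rw [sub_smul, one_smul, h3, sub_self]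
    rcases smul_eq_zero.mp h4 with h | h
    · exact sub_eq_zero.mp h
    · exact absurd h hε'ne
  -- θ * e = θ expanded, gives x = 1
  have h5 : x • (θ * (θs * θ)) = θ := by
    have h := hθe
    rw [heq] at h
    have hb : θ * (θ * θs) = 0 := by rw [← mul_assoc, hθ2, zero_mul]
    simp only [mul_add, mul_smul_comm, hb, smul_zero, add_zero, hθ2, zero_smul] at h
    exact h
  have hx : x = 1 := by
    have h3 : x • (θ * (θs * θ) * θs) = θ * θs := by rw [← smul_mul_assoc, h5]
    have hassoc : θ * (θs * θ) * θs = (θ * θs) * (θ * θs) := by simp only [mul_assoc]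
    rw [hassoc, hε'.eq] at h3
    have h4 : (x - 1) • (θ * θs) = 0 := by rw [sub_smul, one_smul, h3, sub_self]
    rcases smul_eq_zero.mp h4 with h | h
    · exact sub_eq_zero.mp h
    · exact absurd h hε'ne
  subst hx; subst hy
  rw [one_smul, one_smul, zero_smul, add_zero] at heq
  rw [one_smul] at h1 h5
  -- products
  have hεθ : θs * θ * θ = 0 := by rw [mul_assoc, hθ2, mul_zero]
  have hε'θ : θ * θs * θ = θ := by rw [mul_assoc]; exact h1
  have hθε : θ * (θs * θ) = θ := h5
  have hθε' : θ * (θ * θs) = 0 := by rw [← mul_assoc, hθ2, zero_mul]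
  -- idempotency of e gives z • θ = 0
  have key : (θs * θ + θ * θs) + (z • θ + z • θ) = (θs * θ + θ * θs) + z • θ := by
    have h := he.eq
    nth_rewrite 1 [heq] at h
    nth_rewrite 1 [heq] at h
    nth_rewrite 1 [heq] at h
    simp only [add_mul, mul_add, smul_mul_assoc, mul_smul_comm, smul_smul,
      hε.eq, hε'.eq, horth1, horth2, hεθ, hε'θ, hθε, hθε', hθ2, smul_zero,
      zero_add, add_zero] at h
    rw [← h]
    abel
  have hz0 : z • θ = 0 := by
    have h6 : z • θ + z • θ = z • θ := add_left_cancel key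
    have h7 : z • θ + z • θ = 0 + z • θ := by rw [h6, zero_add]
    exact add_right_cancel h7
  have hz : z = 0 := by
    have h8 : z • (θ * θs) = 0 := by rw [← smul_mul_assoc, hz0, zero_mul]
    rcases smul_eq_zero.mp h8 with h | h
    · exact h
    · exact absurd h hε'ne
  subst hz
  rw [zero_smul, add_zero] at heq
  exact ⟨rfl, rfl, rfl, rfl, heq⟩
end

section
/- Let K be a field with char K ≠ 2, V a K-algebra, and ρ, f, e ∈ V with e an identity for the subalgebra generated by {e, ρ, f}, ρ² = 0, f·ρ = p·ρ for some p ∈ K. Suppose ρ⋄ ∈ V satisfies ρ·ρ⋄·ρ = ρ and ρ⋄·ρ⋄ = x·ρ⋄ + y·ρ + z·e + w·f for scalars x,y,z,w. Then ρ★ := ρ⋄ − (x/2)·e − (z + w·p + x²/4)·ρ satisfies ρ★·ρ★·ρ = 0 and ρ·ρ★·ρ = ρ. -/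
/-- Explicit construction in Case 2 of Proposition 7.9: with ρ² = 0, fρ = p·ρ,
ρρ⋄ρ = ρ and ρ⋄ρ⋄ = x·ρ⋄ + y·ρ + z·e + w·f, the corrected element
ρ★ = ρ⋄ − (x/2)·e − (z + wp + x²/4)·ρ satisfies ρ★ρ★ρ = 0 and ρρ★ρ = ρ. -/
theorem stmt_19 {K V : Type*} [Field K] [Ring V] [Algebra K V]
    (hchar : (2 : K) ≠ 0)
    (ρ f e ρd : V) (p x y z w : K)
    (hee : e * e = e) (heρ : e * ρ = ρ) (hρe : ρ * e = ρ)
    (hef : e * f = f) (hfe : f * e = f)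
    (heρd : e * ρd = ρd) (hρde : ρd * e = ρd)
    (hρ2 : ρ * ρ = 0) (hfρ : f * ρ = p • ρ)
    (h1 : ρ * ρd * ρ = ρ)
    (h2 : ρd * ρd = x • ρd + y • ρ + z • e + w • f) :
    (ρd - (x / 2) • e - (z + w * p + x ^ 2 / 4) • ρ) *
        (ρd - (x / 2) • e - (z + w * p + x ^ 2 / 4) • ρ) * ρ = 0 ∧
    ρ * (ρd - (x / 2) • e - (z + w * p + x ^ 2 / 4) • ρ) * ρ = ρ := by
  have h3 : ρd * ρd * ρ = x • (ρd * ρ) + (z + w * p) • ρ := by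
    rw [h2]
    simp only [add_mul, smul_mul_assoc, hρ2, heρ, hfρ, smul_smul, smul_zero, add_zero]
    module
  have h4 : ρd * ρ * ρ = 0 := by rw [mul_assoc, hρ2, mul_zero]
  have h4ne : (4 : K) ≠ 0 := by
    have : (4 : K) = 2 * 2 := by norm_num
    rw [this]; exact mul_ne_zero hchar hchar
  constructor
  · simp only [sub_mul, mul_sub, smul_mul_assoc, mul_smul_comm, hρ2, heρ, hρe, heρd, hρde,
      hee, h4, smul_zero, sub_zero, h3]
    rw [h1]
    match_scalars <;> field_simp <;> ring
  · simp only [sub_mul, mul_sub, smul_mul_assoc, mul_smul_comm, hρ2, hρe,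
      smul_zero, sub_zero, h1]
end
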